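/- arXiv:1804.10239 — 3 statements merged into one kernel-verified Lean document; each statement's English description precedes it below -/
import Mathlib

section
/- Let n ≥ 1, let a ≥ 1 and M ≥ 0, and let K ⊂ ℝⁿ be a compact set with empty interior such that ℝⁿ \ K is a-quasiconvex. If f : ℝⁿ → ℝ is continuous and every point of ℝⁿ \ K has a neighborhood on which f is M-Lipschitz, then f is (a·M)-Lipschitz on all of ℝⁿ. -/
open Set Metric

noncomputable section

/-- An open set `Ω ⊂ ℝⁿ` is `a`-quasiconvex if any two of its points can be joined by a
rectifiable curve in `Ω` of length at most `a` times their distance. -/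
def IsQuasiconvexSet {n : ℕ} (a : ℝ) (Ω : Set (EuclideanSpace ℝ (Fin n))) : Prop :=
  ∀ x ∈ Ω, ∀ y ∈ Ω, ∃ γ : Path x y,
    Set.range γ ⊆ Ω ∧ eVariationOn γ Set.univ ≤ ENNReal.ofReal (a * dist x y)

/-!
Along a curve `γ` of finite length, a function that is locally `M`-Lipschitz near every point
of `γ` changes by at most `M · length γ`: cut `γ` into finitely many arcs, each inside one
Lipschitz neighbourhood, and add up. Quasiconvexity of `ℝⁿ \ K` then makes `f` globally
`(a·M)`-Lipschitz on `ℝⁿ \ K`, and since `K` has empty interior this set is dense, so the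
estimate passes to all of `ℝⁿ` by continuity.
-/

open scoped NNReal unitInterval Topology

lemma unitInterval.Icc_zero_one : Icc (0 : I) 1 = univ :=
  eq_univ_of_forall fun _ ↦ ⟨unitInterval.nonneg', unitInterval.le_one'⟩

theorem eVariationOn_comp_le_of_forall_exists_lipschitzOnWith {E F : Type*}
    [PseudoEMetricSpace E] [PseudoEMetricSpace F] {γ : I → E} (hγ : Continuous γ) {f : E → F}
    {M : ℝ≥0} (hf : ∀ s, ∃ U ∈ 𝓝 (γ s), LipschitzOnWith M f U) :
    eVariationOn (f ∘ γ) univ ≤ M * eVariationOn γ univ := by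
  choose U hU hfU using hf
  obtain ⟨t, ht0, ht_mono, ⟨m, htm⟩, ht_sub⟩ :=
    exists_monotone_Icc_subset_open_cover_unitInterval
      (c := fun s ↦ γ ⁻¹' interior (U s)) (fun s ↦ isOpen_interior.preimage hγ)
      (fun s _ ↦ mem_iUnion.2 ⟨s, mem_interior_iff_mem_nhds.2 (hU s)⟩)
  have key : ∀ k, eVariationOn (f ∘ γ) (univ ∩ Icc 0 (t k)) ≤
      M * eVariationOn γ (univ ∩ Icc 0 (t k)) := by
    intro k
    induction k with
    | zero => simp [ht0, eVariationOn.subsingleton]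
    | succ k ih =>
      obtain ⟨s, hs⟩ := ht_sub k
      have piece : eVariationOn (f ∘ γ) (univ ∩ Icc (t k) (t (k + 1))) ≤
          M * eVariationOn γ (univ ∩ Icc (t k) (t (k + 1))) :=
        (hfU s).comp_eVariationOn_le fun r hr ↦ interior_subset (hs hr.2)
      have h0k : 0 ≤ t k := ht0 ▸ ht_mono (Nat.zero_le k)
      have hkk : t k ≤ t (k + 1) := ht_mono (Nat.le_succ k)
      rw [← eVariationOn.Icc_add_Icc _ h0k hkk (mem_univ _),
        ← eVariationOn.Icc_add_Icc _ h0k hkk (mem_univ _), mul_add]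
      exact add_le_add ih piece
  simpa [htm m le_rfl, unitInterval.Icc_zero_one] using key m

theorem IsQuasiconvexSet.lipschitzOnWith {n : ℕ} {a : ℝ} {Ω : Set (EuclideanSpace ℝ (Fin n))}
    (hΩ : IsQuasiconvexSet a Ω) (ha : 0 ≤ a) {F : Type*} [PseudoEMetricSpace F]
    {f : EuclideanSpace ℝ (Fin n) → F} {M : ℝ≥0}
    (hf : ∀ x ∈ Ω, ∃ U ∈ 𝓝 x, LipschitzOnWith M f U) :
    LipschitzOnWith (a.toNNReal * M) f Ω := by
  intro x hx y hy
  obtain ⟨γ, hγΩ, hγ⟩ := hΩ x hx y hy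
  calc edist (f x) (f y) = edist ((f ∘ γ) 0) ((f ∘ γ) 1) := by simp
    _ ≤ eVariationOn (f ∘ γ) univ := eVariationOn.edist_le _ (mem_univ _) (mem_univ _)
    _ ≤ M * eVariationOn γ univ :=
      eVariationOn_comp_le_of_forall_exists_lipschitzOnWith γ.continuous
        fun s ↦ hf _ (hγΩ (mem_range_self s))
    _ ≤ M * ENNReal.ofReal (a * dist x y) := by gcongr
    _ = ↑(a.toNNReal * M) * edist x y := by
      rw [ENNReal.ofReal_mul ha, edist_dist, ENNReal.ofReal, ENNReal.coe_mul]; ring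

theorem lipschitz_of_locally_lipschitz_off_quasiconvex_complement_general
    (n : ℕ) (a M : ℝ) (ha : 1 ≤ a) (hM : 0 ≤ M)
    (K : Set (EuclideanSpace ℝ (Fin n))) (hKint : interior K = ∅)
    (hqc : IsQuasiconvexSet a Kᶜ)
    (f : EuclideanSpace ℝ (Fin n) → ℝ) (hf : Continuous f)
    (hloc : ∀ x ∉ K, ∃ U ∈ nhds x, ∀ y ∈ U, ∀ z ∈ U, |f y - f z| ≤ M * dist y z) :
    ∀ x y : EuclideanSpace ℝ (Fin n), |f x - f y| ≤ a * M * dist x y := by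
  have hlocLip : ∀ x ∉ K, ∃ U ∈ 𝓝 x, LipschitzOnWith M.toNNReal f U := fun x hx ↦
    (hloc x hx).imp fun U ⟨hU, hfU⟩ ↦ ⟨hU, LipschitzOnWith.of_dist_le_mul fun y hy z hz ↦ by
      simpa [Real.dist_eq, hM] using hfU y hy z hz⟩
  have hclosure : closure Kᶜ = univ := by rw [closure_compl, hKint, compl_empty]
  have hlip : LipschitzWith (a.toNNReal * M.toNNReal) f := by
    rw [← lipschitzOnWith_univ, ← hclosure]
    exact (hqc.lipschitzOnWith (by linarith) hlocLip).closure hf.continuousOn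
  intro x y
  simpa [Real.dist_eq, hM, show 0 ≤ a by linarith] using hlip.dist_le_mul x y

/-- If `K ⊂ ℝⁿ` is compact with empty interior and `a`-quasiconvex complement, `f : ℝⁿ → ℝ` is
continuous and every point of `ℝⁿ \ K` has a neighborhood on which `f` is `M`-Lipschitz, then
`f` is `(a·M)`-Lipschitz on all of `ℝⁿ`. -/
theorem lipschitz_of_locally_lipschitz_off_quasiconvex_complement
    (n : ℕ) (hn : 1 ≤ n) (a M : ℝ) (ha : 1 ≤ a) (hM : 0 ≤ M)
    (K : Set (EuclideanSpace ℝ (Fin n))) (hK : IsCompact K) (hKint : interior K = ∅)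
    (hqc : IsQuasiconvexSet a Kᶜ)
    (f : EuclideanSpace ℝ (Fin n) → ℝ) (hf : Continuous f)
    (hloc : ∀ x ∉ K, ∃ U ∈ nhds x, ∀ y ∈ U, ∀ z ∈ U, |f y - f z| ≤ M * dist y z) :
    ∀ x y : EuclideanSpace ℝ (Fin n), |f x - f y| ≤ a * M * dist x y :=
  lipschitz_of_locally_lipschitz_off_quasiconvex_complement_general n a M ha hM K hKint hqc f hf
    hloc
end
end

section
/- There is a universal constant C > 0 such that the following holds. Let (x_k)_{k≥1} ⊂ (0, ∞) be a strictly decreasing sequence converging to 0, let (y_k)_{k≥1} ⊂ (−∞, 0) be a strictly increasing sequence converging to 0, let R > 0 with x₁ < R and |y₁| < R, and let N be a positive integer. Then there exist δ > 0 and a nonincreasing Lipschitz function u : [0, ∞) → [0, 1] with u ≡ 1 on [0, δ] and u ≡ 0 on [R, ∞), such that the radial function g : ℝ² → ℝ defined by g(z) = u(|z|) satisfies ∫_{ℝ²} ‖∇g‖² ≤ C/N, and |u(x_k) − u(x_{k+1})| ≤ 1/N and |u(|y_k|) − u(|y_{k+1}|)| ≤ 1/N for all k ≥ 1. -/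
open MeasureTheory Set Metric Filter

noncomputable section

abbrev Plane := EuclideanSpace ℝ (Fin 2)

/-!
Take `u` to be the average of `N` piecewise linear ramps, the `i`-th falling from `1` to `0` on
`[a i, 2 a i]`, at scales separated by `2 a (i + 1) < a i`. The radial extension of a single ramp
has gradient of size `1 / a i` on an annulus of area at most `4 π (a i) ^ 2`, so its energy is
bounded independently of the scale; since the annuli are disjoint, the average has energy at most
`N * 4 π / N ^ 2`. Choosing the scales so that each gap `(2 a (i + 1), a i)` contains a point of
both sequences, at most one ramp moves between two consecutive points of a sequence, so `u`
changes there by at most `1 / N`.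
-/

open Topology NNReal

theorem StrictAnti.notMem_Ioo_succ {β : Type*} [Preorder β] {p : ℕ → β} (hp : StrictAnti p)
    (k m : ℕ) :
    p m ∉ Ioo (p (k + 1)) (p k) := fun ⟨h₁, h₂⟩ => by
  have := hp.lt_iff_gt.1 h₁
  have := hp.lt_iff_gt.1 h₂
  omega

theorem norm_fderiv_comp_norm_le {E : Type*} [NormedAddCommGroup E] [NormedSpace ℝ E]
    {u v : ℝ → ℝ} {K : ℝ≥0} {z : E} (huv : u =ᶠ[𝓝 ‖z‖] v) (hv : LipschitzWith K v) :
    ‖fderiv ℝ (fun w => u ‖w‖) z‖ ≤ K := by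
  have : (fun w : E => u ‖w‖) =ᶠ[𝓝 z] fun w => v ‖w‖ :=
    (continuous_norm.tendsto z).eventually huv
  rw [this.fderiv_eq]
  simpa [Function.comp_def] using
    norm_fderiv_le_of_lipschitz ℝ (hv.comp (lipschitzWith_one_norm (E := E)))

namespace RadialBump

def ramp (c t : ℝ) : ℝ := min 1 (max 0 (2 - t / c))

theorem ramp_mem_Icc (c t : ℝ) : ramp c t ∈ Icc 0 1 :=
  ⟨le_min zero_le_one (le_max_left _ _), min_le_left _ _⟩

theorem ramp_eq_one {c t : ℝ} (hc : 0 < c) (h : t ≤ c) : ramp c t = 1 := by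
  have : t / c ≤ 1 := (div_le_one hc).2 h
  simp only [ramp]
  rw [min_eq_left]
  exact le_max_of_le_right (by linarith)

theorem ramp_eq_zero {c t : ℝ} (hc : 0 < c) (h : 2 * c ≤ t) : ramp c t = 0 := by
  have : 2 ≤ t / c := (le_div_iff₀ hc).2 h
  simp only [ramp]
  rw [max_eq_left (by linarith), min_eq_right zero_le_one]

theorem antitone_ramp {c : ℝ} (hc : 0 ≤ c) : Antitone (ramp c) := fun _ _ h =>
  min_le_min_left _ <| max_le_max_left _ <| sub_le_sub_left (div_le_div_of_nonneg_right h hc) _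

theorem lipschitzWith_ramp (c : ℝ) : LipschitzWith ‖c⁻¹‖₊ (ramp c) := by
  have : LipschitzWith ‖c⁻¹‖₊ fun t : ℝ => 2 - t / c := .of_dist_le_mul fun s t => le_of_eq <| by
    rw [Real.dist_eq, Real.dist_eq, coe_nnnorm, Real.norm_eq_abs, ← abs_mul, ← abs_neg]
    congr 1; ring
  exact (this.const_max 0).const_min 1

theorem ramp_eq_ramp_of_le {c s t : ℝ} (hc : 0 < c) (hst : s ≤ t) (h : 2 * c ≤ s ∨ t ≤ c) :
    ramp c s = ramp c t := by
  rcases h with h | h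
  · rw [ramp_eq_zero hc h, ramp_eq_zero hc (h.trans hst)]
  · rw [ramp_eq_one hc h, ramp_eq_one hc (hst.trans h)]

theorem ramp_eventuallyEq_const {c r : ℝ} (hc : 0 < c) (hr : r ∉ Icc c (2 * c)) :
    ramp c =ᶠ[𝓝 r] fun _ => ramp c r := by
  rw [mem_Icc, not_and_or, not_le, not_le] at hr
  rcases hr with h | h
  · filter_upwards [eventually_le_nhds h] with t ht
    rw [ramp_eq_one hc ht, ramp_eq_one hc h.le]
  · filter_upwards [eventually_ge_nhds h] with t ht
    rw [ramp_eq_zero hc ht, ramp_eq_zero hc h.le]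

structure IsLacunary (a : ℕ → ℝ) : Prop where
  pos : ∀ i, 0 < a i
  two_mul_succ_lt : ∀ i, 2 * a (i + 1) < a i

namespace IsLacunary

variable {a : ℕ → ℝ}

theorem strictAnti (ha : IsLacunary a) : StrictAnti a :=
  strictAnti_nat_of_succ_lt fun i => by linarith [ha.pos (i + 1), ha.two_mul_succ_lt i]

theorem two_mul_lt_of_lt (ha : IsLacunary a) {i j : ℕ} (hij : i < j) : 2 * a j < a i := by
  linarith [ha.strictAnti.antitone (Nat.succ_le_of_lt hij), ha.two_mul_succ_lt i]

end IsLacunary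

variable {a : ℕ → ℝ} {N : ℕ}

def bump (a : ℕ → ℝ) (N : ℕ) (t : ℝ) : ℝ := (N : ℝ)⁻¹ * ∑ i ∈ Finset.range N, ramp (a i) t

theorem bump_mem_Icc (a : ℕ → ℝ) (N : ℕ) (t : ℝ) : bump a N t ∈ Icc 0 1 := by
  have hsum : ∑ i ∈ Finset.range N, ramp (a i) t ≤ N := by
    simpa using Finset.sum_le_sum (s := Finset.range N) fun i _ => (ramp_mem_Icc (a i) t).2
  refine ⟨mul_nonneg (by positivity) (Finset.sum_nonneg fun i _ => (ramp_mem_Icc (a i) t).1), ?_⟩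
  calc bump a N t ≤ (N : ℝ)⁻¹ * N := mul_le_mul_of_nonneg_left hsum (by positivity)
    _ ≤ 1 := inv_mul_le_one_of_le₀ le_rfl (by positivity)

theorem antitone_bump (ha : ∀ i, 0 ≤ a i) : Antitone (bump a N) := fun _ _ h =>
  mul_le_mul_of_nonneg_left (Finset.sum_le_sum fun i _ => antitone_ramp (ha i) h) (by positivity)

theorem lipschitzWith_bump (a : ℕ → ℝ) (N : ℕ) :
    LipschitzWith (‖(N : ℝ)⁻¹‖₊ * ∑ i ∈ Finset.range N, ‖(a i)⁻¹‖₊) (bump a N) :=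
  .of_dist_le_mul fun s t => by
    change dist ((N : ℝ)⁻¹ • (_ : ℝ)) ((N : ℝ)⁻¹ • (_ : ℝ)) ≤ _
    rw [dist_smul₀, NNReal.coe_mul, coe_nnnorm, NNReal.coe_sum, mul_assoc, Finset.sum_mul]
    gcongr
    exact dist_sum_sum_le_of_le _ fun i _ => (lipschitzWith_ramp (a i)).dist_le_mul s t

theorem bump_eq_one (ha : IsLacunary a) (hN : 0 < N) {t : ℝ} (ht : t ≤ a (N - 1)) :
    bump a N t = 1 := by
  have hramp : ∀ i ∈ Finset.range N, ramp (a i) t = 1 := fun i hi => ramp_eq_one (ha.pos i) <|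
    ht.trans (ha.strictAnti.antitone (Nat.le_sub_one_of_lt (Finset.mem_range.1 hi)))
  rw [bump, Finset.sum_congr rfl hramp]
  simp [hN.ne']

theorem bump_eq_zero (ha : IsLacunary a) {t : ℝ} (ht : 2 * a 0 ≤ t) : bump a N t = 0 := by
  have hramp : ∀ i ∈ Finset.range N, ramp (a i) t = 0 := fun i _ =>
    ramp_eq_zero (ha.pos i) (le_trans (by linarith [ha.strictAnti.antitone i.zero_le]) ht)
  rw [bump, Finset.sum_congr rfl hramp]
  simp

theorem abs_bump_sub_le (ha : IsLacunary a) {p : ℕ → ℝ}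
    (hp : ∀ j, ∃ k, 2 * a (j + 1) < p k ∧ p k < a j) {s t : ℝ} (hst : s ≤ t)
    (hgap : ∀ k, p k ∉ Ioo s t) : |bump a N s - bump a N t| ≤ 1 / N := by
  set d : ℕ → ℝ := fun i => ramp (a i) s - ramp (a i) t
  have hd_le_one (i : ℕ) : d i ≤ 1 := by
    linarith [(ramp_mem_Icc (a i) s).2, (ramp_mem_Icc (a i) t).1]
  have hactive (i : ℕ) (hi : d i ≠ 0) : s < 2 * a i ∧ a i < t := by
    by_contra h
    rw [not_and_or, not_lt, not_lt] at h
    exact hi (sub_eq_zero.2 (ramp_eq_ramp_of_le (ha.pos i) hst h))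
  -- two ramps changing between `s` and `t` would enclose a whole gap, hence a point `p k`
  have hd_single {i j : ℕ} (hij : i < j) (hi : d i ≠ 0) (hj : d j ≠ 0) : False := by
    obtain ⟨k, hk₁, hk₂⟩ := hp (j - 1)
    rw [Nat.sub_add_cancel (by omega)] at hk₁
    exact hgap k ⟨(hactive j hj).1.trans hk₁,
      (hk₂.trans_le (ha.strictAnti.antitone (by omega))).trans (hactive i hi).2⟩
  have hsum : ∑ i ∈ Finset.range N, d i ≤ 1 := by
    by_cases h : ∃ i ∈ Finset.range N, d i ≠ 0
    · obtain ⟨i, hi, hdi⟩ := h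
      rw [Finset.sum_eq_single_of_mem i hi fun j _ hji => by_contra fun hdj =>
        hji.lt_or_gt.elim (hd_single · hdj hdi) (hd_single · hdi hdj)]
      exact hd_le_one i
    · push Not at h
      rw [Finset.sum_eq_zero h]
      exact zero_le_one
  rw [abs_of_nonneg (sub_nonneg.2 (antitone_bump (fun i => (ha.pos i).le) hst)), bump, bump,
    ← mul_sub, ← Finset.sum_sub_distrib, one_div]
  exact mul_le_of_le_one_right (by positivity) hsum

theorem sq_norm_fderiv_bump_le {E : Type*} [NormedAddCommGroup E] [NormedSpace ℝ E]
    (ha : IsLacunary a) (z : E) :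
    ‖fderiv ℝ (fun w => bump a N ‖w‖) z‖ ^ 2 ≤
      ∑ i ∈ Finset.range N,
        (closedBall (0 : E) (2 * a i)).indicator (fun _ => ((N : ℝ) * a i)⁻¹ ^ 2) z := by
  have hterm_nonneg (i : ℕ) :
      0 ≤ (closedBall (0 : E) (2 * a i)).indicator (fun _ => ((N : ℝ) * a i)⁻¹ ^ 2) z :=
    indicator_nonneg (fun _ _ => sq_nonneg _) z
  by_cases hactive : ∃ i ∈ Finset.range N, ‖z‖ ∈ Icc (a i) (2 * a i)
  · obtain ⟨i, hi, hzi⟩ := hactive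
    -- the intervals `[a j, 2 a j]` are disjoint, so near `‖z‖` only the `i`-th ramp varies
    have hrest : ∀ j ∈ (Finset.range N).erase i, ramp (a j) =ᶠ[𝓝 ‖z‖] fun _ => ramp (a j) ‖z‖ :=
      fun j hj => ramp_eventuallyEq_const (ha.pos j) fun hzj => by
        rcases (Finset.ne_of_mem_erase hj).lt_or_gt with h | h
        · linarith [ha.two_mul_lt_of_lt h, hzi.2, hzj.1]
        · linarith [ha.two_mul_lt_of_lt h, hzi.1, hzj.2]
    have hloc : bump a N =ᶠ[𝓝 ‖z‖] fun t => (N : ℝ)⁻¹ *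
        (ramp (a i) t + ∑ j ∈ (Finset.range N).erase i, ramp (a j) ‖z‖) := by
      filter_upwards [(eventually_all_finset _).2 hrest] with t ht
      rw [bump, ← Finset.add_sum_erase _ _ hi, Finset.sum_congr rfl ht]
    have hlip := (lipschitzWith_smul (N : ℝ)⁻¹).comp
      ((lipschitzWith_ramp (a i)).add (.const (∑ j ∈ (Finset.range N).erase i, ramp (a j) ‖z‖)))
    have hderiv := norm_fderiv_comp_norm_le hloc hlip
    have hz : z ∈ closedBall (0 : E) (2 * a i) := mem_closedBall_zero_iff.2 hzi.2
    calc ‖fderiv ℝ (fun w => bump a N ‖w‖) z‖ ^ 2 ≤ ((N : ℝ) * a i)⁻¹ ^ 2 := by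
          have := (ha.pos i).le
          gcongr
          rw [mul_inv]
          simpa [abs_of_nonneg this] using hderiv
      _ = (closedBall (0 : E) (2 * a i)).indicator (fun _ => ((N : ℝ) * a i)⁻¹ ^ 2) z :=
          (indicator_of_mem hz (fun _ => ((N : ℝ) * a i)⁻¹ ^ 2)).symm
      _ ≤ _ := Finset.single_le_sum (fun j _ => hterm_nonneg j) hi
  · push Not at hactive
    have hloc : bump a N =ᶠ[𝓝 ‖z‖] fun _ => bump a N ‖z‖ := by
      filter_upwards [(eventually_all_finset _).2 fun i hi =>
        ramp_eventuallyEq_const (ha.pos i) (hactive i hi)] with t ht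
      rw [bump, bump, Finset.sum_congr rfl ht]
    have hderiv := norm_fderiv_comp_norm_le hloc (.const _)
    rw [NNReal.coe_zero, norm_le_zero_iff] at hderiv
    simpa [hderiv] using Finset.sum_nonneg fun i _ => hterm_nonneg i

theorem integral_sq_norm_fderiv_bump_le (ha : IsLacunary a) :
    ∫ z : Plane, ‖fderiv ℝ (fun w : Plane => bump a N ‖w‖) z‖ ^ 2 ≤ 4 * Real.pi / N := by
  have hint (i : ℕ) : Integrable
      ((closedBall (0 : Plane) (2 * a i)).indicator fun _ => ((N : ℝ) * a i)⁻¹ ^ 2) :=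
    (integrable_indicator_iff measurableSet_closedBall).2 <|
      integrableOn_const measure_closedBall_lt_top.ne
  calc ∫ z : Plane, ‖fderiv ℝ (fun w : Plane => bump a N ‖w‖) z‖ ^ 2
      ≤ ∫ z : Plane, ∑ i ∈ Finset.range N,
          (closedBall (0 : Plane) (2 * a i)).indicator (fun _ => ((N : ℝ) * a i)⁻¹ ^ 2) z :=
        integral_mono_of_nonneg (.of_forall fun _ => sq_nonneg _)
          (integrable_finsetSum _ fun i _ => hint i) (.of_forall (sq_norm_fderiv_bump_le ha))
    _ = ∑ i ∈ Finset.range N, Real.pi * (2 * a i) ^ 2 * ((N : ℝ) * a i)⁻¹ ^ 2 := by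
        rw [integral_finsetSum _ fun i _ => hint i]
        refine Finset.sum_congr rfl fun i _ => ?_
        rw [integral_indicator_const _ measurableSet_closedBall, measureReal_def,
          EuclideanSpace.volume_closedBall_fin_two, ENNReal.toReal_mul, ENNReal.toReal_pow,
          ENNReal.toReal_ofReal (by linarith [ha.pos i]), ENNReal.toReal_ofReal Real.pi_nonneg,
          smul_eq_mul]
        ring
    _ = 4 * Real.pi / N := by
        rcases N.eq_zero_or_pos with rfl | hN
        · simp
        have hterm (i : ℕ) :
            Real.pi * (2 * a i) ^ 2 * ((N : ℝ) * a i)⁻¹ ^ 2 = 4 * Real.pi / N ^ 2 := by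
          have := (ha.pos i).ne'
          field_simp
          norm_num
        rw [Finset.sum_congr rfl fun i _ => hterm i, Finset.sum_const, Finset.card_range,
          nsmul_eq_mul]
        field_simp

theorem exists_isLacunary_separating {p q : ℕ → ℝ} (hp : ∀ k, 0 < p k)
    (hp₀ : Tendsto p atTop (𝓝 0)) (hq : ∀ k, 0 < q k) (hq₀ : Tendsto q atTop (𝓝 0))
    {c : ℝ} (hc : 0 < c) :
    ∃ a : ℕ → ℝ, IsLacunary a ∧ a 0 = c ∧
      (∀ j, ∃ k, 2 * a (j + 1) < p k ∧ p k < a j) ∧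
      (∀ j, ∃ k, 2 * a (j + 1) < q k ∧ q k < a j) := by
  have step (c : ℝ) (hc : 0 < c) : ∃ c' > 0,
      (∃ k, 2 * c' < p k ∧ p k < c) ∧ (∃ k, 2 * c' < q k ∧ q k < c) := by
    obtain ⟨k, hk⟩ := (hp₀.eventually_lt_const hc).exists
    obtain ⟨m, hm⟩ := (hq₀.eventually_lt_const hc).exists
    have hmin : 0 < min (p k) (q m) := lt_min (hp k) (hq m)
    refine ⟨min (p k) (q m) / 4, by positivity, ⟨k, ?_, hk⟩, ⟨m, ?_, hm⟩⟩
    · linarith [min_le_left (p k) (q m)]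
    · linarith [min_le_right (p k) (q m)]
  choose! f hf_pos hf_p hf_q using step
  have ha_pos (n : ℕ) : 0 < f^[n] c := by
    induction n with
    | zero => exact hc
    | succ n ih => rw [Function.iterate_succ_apply']; exact hf_pos _ ih
  refine ⟨fun n => f^[n] c, ⟨ha_pos, fun j => ?_⟩, rfl, fun j => ?_, fun j => ?_⟩ <;>
    simp only [Function.iterate_succ_apply']
  · obtain ⟨k, hk₁, hk₂⟩ := hf_p _ (ha_pos j)
    exact hk₁.trans hk₂
  · exact hf_p _ (ha_pos j)
  · exact hf_q _ (ha_pos j)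

end RadialBump

open RadialBump in
/-- There is a universal constant `C > 0` such that for any strictly decreasing positive
sequence `x_k → 0`, strictly increasing negative sequence `y_k → 0`, radius `R` exceeding
`x 0` and `|y 0|`, and `N ≥ 1`, there is a nonincreasing Lipschitz function
`u : [0,∞) → [0,1]`, equal to `1` near `0` and to `0` on `[R,∞)`, whose radial extension to
`ℝ²` has Dirichlet energy at most `C/N`, and whose successive oscillations along both
sequences are at most `1/N`. -/
theorem radial_bump_small_energy :
    ∃ C : ℝ, 0 < C ∧
      ∀ (x y : ℕ → ℝ),
        (∀ k, 0 < x k) → StrictAnti x → Tendsto x atTop (nhds 0) →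
        (∀ k, y k < 0) → StrictMono y → Tendsto y atTop (nhds 0) →
        ∀ R : ℝ, x 0 < R → |y 0| < R →
        ∀ N : ℕ, 0 < N →
        ∃ (δ : ℝ) (u : ℝ → ℝ) (L : NNReal), 0 < δ ∧
          AntitoneOn u (Ici 0) ∧
          LipschitzOnWith L u (Ici 0) ∧
          (∀ t ∈ Ici (0:ℝ), 0 ≤ u t ∧ u t ≤ 1) ∧
          (∀ t ∈ Icc (0:ℝ) δ, u t = 1) ∧
          (∀ t ∈ Ici R, u t = 0) ∧
          (∫ z : Plane, ‖fderiv ℝ (fun w : Plane => u ‖w‖) z‖ ^ 2) ≤ C / N ∧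
          (∀ k, |u (x k) - u (x (k + 1))| ≤ 1 / N) ∧
          (∀ k, |u (|y k|) - u (|y (k + 1)|)| ≤ 1 / N) := by
  refine ⟨4 * Real.pi, by positivity, fun x y hx hx_anti hx₀ hy hy_mono hy₀ R hxR _ N hN => ?_⟩
  have hy_abs : StrictAnti fun k => |y k| := fun i j hij => by
    simp only [abs_of_neg (hy _)]
    linarith [hy_mono hij]
  have hy_abs₀ : Tendsto (fun k => |y k|) atTop (𝓝 0) := by simpa using hy₀.abs
  obtain ⟨a, ha, ha₀, hxa, hya⟩ := exists_isLacunary_separating hx hx₀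
    (fun k => abs_pos.2 (hy k).ne) hy_abs₀ (half_pos ((hx 0).trans hxR))
  refine ⟨a (N - 1), bump a N, _, ha.pos _, (antitone_bump fun i => (ha.pos i).le).antitoneOn _,
    (lipschitzWith_bump a N).lipschitzOnWith, fun t _ => bump_mem_Icc a N t,
    fun t ht => bump_eq_one ha hN ht.2,
    fun t ht => bump_eq_zero ha (by rw [ha₀]; linarith [ht.out]),
    integral_sq_norm_fderiv_bump_le ha, fun k => ?_, fun k => ?_⟩
  · rw [abs_sub_comm]
    exact abs_bump_sub_le ha hxa (hx_anti k.lt_succ_self).le (hx_anti.notMem_Ioo_succ k)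
  · rw [abs_sub_comm]
    exact abs_bump_sub_le ha hya (hy_abs k.lt_succ_self).le (hy_abs.notMem_Ioo_succ k)
end
end

section
/- Let W ⊂ ℝ² be an open equilateral triangle with vertices x₁, x₂, x₃, and let c₁, c₂, c₃ ∈ ℝ² be non-collinear points with barycenter a = (c₁ + c₂ + c₃)/3 and canonical tripod G. Then there exists a continuous surjection g : W̄ → G such that g(xᵢ) = cᵢ for i = 1, 2, 3, g maps the midpoint of each edge of W to a, and the restriction of g to each half-edge of ∂W (a segment from the midpoint of an edge of W to one of the endpoints of that edge) is a homeomorphism onto one of the segments [a, cᵢ] of G; in particular g maps ∂W onto G. -/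
open Set Metric

noncomputable section

/-! Let `λ l` be the barycentric coordinates of the triangle. On the closed triangle at most one
`λ l` exceeds `1 / 2`, so `p ↦ a + ∑ l, max (2 λ l (p) - 1) 0 • (c l - a)` is a continuous map
sending the corner `{λ l ≥ 1 / 2}` into `[a, c l]` and the medial triangle to `a`. On the half-edge
from the midpoint of `[x l, x j]` to `x l` only the term `l` survives, and the map is there the
affine parametrisation of `[a, c l]`; these half-edges lie on the boundary and exhaust the tripod.
-/

open AffineMap

theorem affineIndependent_of_pairwise_dist_eq {V P : Type*} [NormedAddCommGroup V]
    [NormedSpace ℝ V] [MetricSpace P] [NormedAddTorsor V P] {x : Fin 3 → P} {s : ℝ} (hs : 0 < s)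
    (hx : ∀ i j, i ≠ j → dist (x i) (x j) = s) : AffineIndependent ℝ x := by
  have hx_eq : x = ![x 0, x 1, x 2] := by
    ext i : 1
    fin_cases i <;> rfl
  rw [hx_eq, affineIndependent_iff_not_collinear_set]
  intro hcol
  rcases hcol.wbtw_or_wbtw_or_wbtw with h | h | h <;>
  linarith [h.dist_add_dist, hx 0 1 (by decide), hx 1 2 (by decide), hx 0 2 (by decide),
    hx 1 0 (by decide), hx 2 1 (by decide), hx 2 0 (by decide)]

theorem Affine.Simplex.centroid_ne_point {k V P : Type*} [DivisionRing k] [CharZero k]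
    [AddCommGroup V] [Module k V] [AddTorsor V P] {n : ℕ} (t : Affine.Simplex k P (n + 1))
    (i : Fin (n + 2)) : Finset.univ.centroid k t.points ≠ t.points i := by
  rw [← Finset.centroid_singleton k t.points i]
  intro h
  have := (t.centroid_eq_iff (m₁ := n + 1) (m₂ := 0) (by simp) (by simp)).1 h
  simpa using congrArg Finset.card this

theorem Finset.univ_centroid_fin_three {k V : Type*} [Field k] [CharZero k] [AddCommGroup V]
    [Module k V] (c : Fin 3 → V) :
    Finset.univ.centroid k c = (3 : k)⁻¹ • (c 0 + c 1 + c 2) := by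
  rw [Finset.centroid_def, Finset.affineCombination_eq_linear_combination _ _ _
    (Finset.univ.sum_centroidWeights_eq_one_of_card_eq_add_one k (n := 2) (by simp))]
  simp [Fin.sum_univ_three, Finset.centroidWeights_apply, smul_add]

namespace AffineBasis

variable {ι E : Type*} [NormedAddCommGroup E] [NormedSpace ℝ E] (b : AffineBasis ι ℝ E)

theorem coord_lineMap (i : ι) (p q : E) (u : ℝ) :
    b.coord i (lineMap p q u) = (1 - u) * b.coord i p + u * b.coord i q := by
  rw [(b.coord i).apply_lineMap, lineMap_apply_module, smul_eq_mul, smul_eq_mul]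

theorem coord_midpoint (i : ι) (p q : E) :
    b.coord i (midpoint ℝ p q) = (b.coord i p + b.coord i q) / 2 := by
  rw [midpoint, coord_lineMap, invOf_eq_inv]
  ring

theorem coord_apply_le_one (i j : ι) : b.coord i (b j) ≤ 1 := by
  classical
  rw [coord_apply]
  split_ifs <;> norm_num

theorem segment_midpoint_subset_convexHull (i j : ι) :
    segment ℝ (midpoint ℝ (b i) (b j)) (b i) ⊆ convexHull ℝ (range b) :=
  have hmem (l : ι) : b l ∈ convexHull ℝ (range b) := subset_convexHull ℝ _ (mem_range_self l)
  (convex_convexHull ℝ _).segment_subset ((convex_convexHull ℝ _).midpoint_mem (hmem i) (hmem j))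
    (hmem i)

variable [Fintype ι]

theorem isClosed_convexHull : IsClosed (convexHull ℝ (range b)) :=
  (finite_range b).isClosed_convexHull (𝕜 := ℝ)

theorem closure_interior_convexHull :
    closure (interior (convexHull ℝ (range b))) = convexHull ℝ (range b) := by
  rw [(convex_convexHull ℝ _).closure_interior_eq_closure_of_nonempty_interior
      ⟨_, b.centroid_mem_interior_convexHull⟩,
    b.isClosed_convexHull.closure_eq]

theorem frontier_interior_convexHull :
    frontier (interior (convexHull ℝ (range b))) = frontier (convexHull ℝ (range b)) := by
  rw [frontier, frontier, interior_interior, b.closure_interior_convexHull,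
    b.isClosed_convexHull.closure_eq]

theorem segment_midpoint_subset_frontier_convexHull {i j k : ι} (hki : k ≠ i) (hkj : k ≠ j) :
    segment ℝ (midpoint ℝ (b i) (b j)) (b i) ⊆ frontier (convexHull ℝ (range b)) := by
  rw [b.isClosed_convexHull.frontier_eq, b.interior_convexHull]
  refine fun p hp => ⟨b.segment_midpoint_subset_convexHull i j hp, fun hpos => ?_⟩
  rw [segment_eq_image_lineMap] at hp
  obtain ⟨u, -, rfl⟩ := hp
  have := hpos k
  rw [coord_lineMap, coord_midpoint, b.coord_apply_ne hki, b.coord_apply_ne hkj] at this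
  simp at this

section

variable {b} {p : E} (hp : p ∈ convexHull ℝ (range b))
include hp

theorem coord_le_one (i : ι) : b.coord i p ≤ 1 := by
  rw [b.convexHull_eq_nonneg_coord] at hp
  calc b.coord i p ≤ ∑ l, b.coord l p :=
      Finset.single_le_sum (fun l _ => hp l) (Finset.mem_univ i)
    _ = 1 := b.sum_coord_apply_eq_one p

theorem coord_add_coord_le_one {i j : ι} (hij : i ≠ j) : b.coord i p + b.coord j p ≤ 1 := by
  classical
  rw [b.convexHull_eq_nonneg_coord] at hp
  calc b.coord i p + b.coord j p = ∑ l ∈ {i, j}, b.coord l p := by rw [Finset.sum_pair hij]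
    _ ≤ ∑ l, b.coord l p :=
      Finset.sum_le_sum_of_subset_of_nonneg (Finset.subset_univ _) fun l _ _ => hp l
    _ = 1 := b.sum_coord_apply_eq_one p

theorem exists_forall_ne_coord_le_half : ∃ i, ∀ l ≠ i, b.coord l p ≤ 1 / 2 := by
  by_cases hbig : ∃ i, 1 / 2 < b.coord i p
  · obtain ⟨i, hi⟩ := hbig
    exact ⟨i, fun l hl => by linarith [coord_add_coord_le_one hp hl]⟩
  · simp only [not_exists, not_lt] at hbig
    obtain ⟨i⟩ := b.nonempty
    exact ⟨i, fun l _ => hbig l⟩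

end

def starCollapse (a : E) (c : ι → E) (p : E) : E :=
  a + ∑ l, max (2 * b.coord l p - 1) 0 • (c l - a)

theorem continuous_starCollapse (a : E) (c : ι → E) : Continuous (b.starCollapse a c) := by
  have := b.finiteDimensional
  exact continuous_const.add <| continuous_finsetSum _ fun l _ =>
    (((continuous_const.mul (b.coord l).continuous_of_finiteDimensional).sub
      continuous_const).max continuous_const).smul continuous_const

variable {b} {a : E} {c : ι → E}

theorem starCollapse_eq_lineMap {p : E} {i : ι} (h : ∀ l ≠ i, b.coord l p ≤ 1 / 2) :
    b.starCollapse a c p = lineMap a (c i) (max (2 * b.coord i p - 1) 0) := by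
  rw [starCollapse, lineMap_apply_module', add_comm, Finset.sum_eq_single i]
  · intro l _ hl
    rw [max_eq_right (by linarith [h l hl]), zero_smul]
  · simp

theorem starCollapse_mem_iUnion_segment {p : E} (hp : p ∈ convexHull ℝ (range b)) :
    b.starCollapse a c p ∈ ⋃ i, segment ℝ a (c i) := by
  obtain ⟨i, hi⟩ := exists_forall_ne_coord_le_half hp
  rw [starCollapse_eq_lineMap hi]
  refine mem_iUnion_of_mem i ?_
  rw [segment_eq_image_lineMap]
  exact mem_image_of_mem _
    ⟨le_max_right _ _, max_le (by linarith [coord_le_one hp i]) zero_le_one⟩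

theorem starCollapse_apply_point (i : ι) : b.starCollapse a c (b i) = c i := by
  rw [starCollapse_eq_lineMap fun l hl => by rw [b.coord_apply_ne hl]; norm_num,
    b.coord_apply_eq]
  norm_num

theorem starCollapse_lineMap_midpoint {i j : ι} (hij : i ≠ j) {u : ℝ} (hu : u ∈ Icc (0 : ℝ) 1) :
    b.starCollapse a c (lineMap (midpoint ℝ (b i) (b j)) (b i) u) = lineMap a (c i) u := by
  have hcoord : ∀ l ≠ i, b.coord l (lineMap (midpoint ℝ (b i) (b j)) (b i) u) ≤ 1 / 2 := by
    intro l hl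
    rw [coord_lineMap, coord_midpoint, b.coord_apply_ne hl]
    nlinarith [hu.1, hu.2, b.coord_apply_le_one l j]
  rw [starCollapse_eq_lineMap hcoord, coord_lineMap, coord_midpoint, b.coord_apply_eq,
    b.coord_apply_ne hij]
  congr 1
  rw [max_eq_left] <;> linarith [hu.1]

theorem starCollapse_midpoint {i j : ι} (hij : i ≠ j) :
    b.starCollapse a c (midpoint ℝ (b i) (b j)) = a := by
  simpa using starCollapse_lineMap_midpoint (a := a) (c := c) hij (u := 0) ⟨le_rfl, zero_le_one⟩

theorem image_starCollapse_segment_midpoint {i j : ι} (hij : i ≠ j) :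
    b.starCollapse a c '' segment ℝ (midpoint ℝ (b i) (b j)) (b i) = segment ℝ a (c i) := by
  rw [segment_eq_image_lineMap, image_image, segment_eq_image_lineMap]
  exact image_congr fun u hu => starCollapse_lineMap_midpoint hij hu

theorem injOn_starCollapse_segment_midpoint {i j : ι} (hij : i ≠ j) (hc : c i ≠ a) :
    InjOn (b.starCollapse a c) (segment ℝ (midpoint ℝ (b i) (b j)) (b i)) := by
  rw [segment_eq_image_lineMap]
  rintro _ ⟨u, hu, rfl⟩ _ ⟨v, hv, rfl⟩ h
  rw [starCollapse_lineMap_midpoint hij hu, starCollapse_lineMap_midpoint hij hv] at h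
  rw [lineMap_injective ℝ hc.symm h]

theorem image_starCollapse_eq_iUnion_segment {S : Set E} (hS : S ⊆ convexHull ℝ (range b))
    (hedges : ∀ i, ∃ j ≠ i, segment ℝ (midpoint ℝ (b i) (b j)) (b i) ⊆ S) :
    b.starCollapse a c '' S = ⋃ i, segment ℝ a (c i) := by
  refine Subset.antisymm (image_subset_iff.2 fun p hp => starCollapse_mem_iUnion_segment (hS hp))
    (iUnion_subset fun i => ?_)
  obtain ⟨j, hji, hj⟩ := hedges i
  rw [← image_starCollapse_segment_midpoint hji.symm]
  exact image_mono hj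

end AffineBasis

/-- Given an open equilateral triangle `W` with vertices `x₀, x₁, x₂` and non-collinear points
`c₀, c₁, c₂` with barycenter `a` and canonical tripod `G = [a,c₀] ∪ [a,c₁] ∪ [a,c₂]`, there is a
continuous surjection `g : W̄ → G` sending `xᵢ` to `cᵢ`, sending the midpoint of each edge to
`a`, and mapping each half-edge of `∂W` homeomorphically onto one of the segments `[a, cᵢ]`;
in particular `g` maps `∂W` onto `G`. -/
theorem collapse_triangle_to_tripod
    (x : Fin 3 → Plane) (s : ℝ) (hs : 0 < s)
    (hx : ∀ i j, i ≠ j → dist (x i) (x j) = s)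
    (W : Set Plane) (hW : W = interior (convexHull ℝ (Set.range x)))
    (c : Fin 3 → Plane) (hc : ¬ Collinear ℝ (Set.range c))
    (a : Plane) (ha : a = (3 : ℝ)⁻¹ • (c 0 + c 1 + c 2))
    (G : Set Plane) (hG : G = ⋃ i : Fin 3, segment ℝ a (c i)) :
    ∃ g : Plane → Plane,
      ContinuousOn g (closure W) ∧
      g '' closure W = G ∧
      (∀ i, g (x i) = c i) ∧
      (∀ i j, i ≠ j → g (midpoint ℝ (x i) (x j)) = a) ∧
      (∀ i j, i ≠ j → ∃ k : Fin 3,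
        InjOn g (segment ℝ (midpoint ℝ (x i) (x j)) (x i)) ∧
        g '' segment ℝ (midpoint ℝ (x i) (x j)) (x i) = segment ℝ a (c k)) ∧
      g '' frontier W = G := by
  have hind := affineIndependent_of_pairwise_dist_eq hs hx
  obtain ⟨b, rfl⟩ : ∃ b : AffineBasis (Fin 3) ℝ Plane, ⇑b = x :=
    ⟨⟨x, hind, hind.affineSpan_eq_top_iff_card_eq_finrank_add_one.mpr (by simp)⟩, rfl⟩
  have hca (i : Fin 3) : c i ≠ a := by
    rw [ha, ← Finset.univ_centroid_fin_three]
    exact (Affine.Simplex.centroid_ne_point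
      ⟨c, affineIndependent_iff_not_collinear.mpr hc⟩ i).symm
  have hnext : ∀ i : Fin 3, i + 1 ≠ i := by decide
  have hthird : ∀ i j : Fin 3, ∃ k, k ≠ i ∧ k ≠ j := by decide
  subst hW hG
  refine ⟨b.starCollapse a c, (b.continuous_starCollapse a c).continuousOn, ?_,
    b.starCollapse_apply_point, fun i j hij => b.starCollapse_midpoint hij,
    fun i j hij => ⟨i, b.injOn_starCollapse_segment_midpoint hij (hca i),
      b.image_starCollapse_segment_midpoint hij⟩, ?_⟩
  · rw [b.closure_interior_convexHull]
    exact b.image_starCollapse_eq_iUnion_segment subset_rfl fun i =>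
      ⟨i + 1, hnext i, b.segment_midpoint_subset_convexHull i (i + 1)⟩
  · rw [b.frontier_interior_convexHull]
    refine b.image_starCollapse_eq_iUnion_segment b.isClosed_convexHull.frontier_subset fun i =>
      ⟨i + 1, hnext i, ?_⟩
    obtain ⟨k, hki, hkj⟩ := hthird i (i + 1)
    exact b.segment_midpoint_subset_frontier_convexHull hki hkj
end
end
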